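/- Deterministic core of Theorem B.4 (convergence of noisy importance-weighted kernel ridge regression). Let H be a complex Hilbert space, let T and T̂ be positive bounded operators on H with ‖T‖_op ≤ 1, and let λ > 0. Set B := (T + λ·Id)^{-1/2}(T − T̂)(T + λ·Id)^{-1/2}. Suppose ‖B‖_op ≤ c for some c ∈ (0,1), and ‖(T + λ·Id)^{-1/2}(T − T̂)‖_op ≤ s for some s ≥ 0. Then for all g, h ∈ H, ‖T^{1/2}((T̂ + λ·Id)^{-1} T̂ g − h)‖ ≤ (1 − c)^{-1}·((s + 1)·‖g − h‖ + 2s·‖h‖) + √λ·‖h‖. (With g = I_BQ, h = I, T and T̂ the population- and sample-level weighted integral operators, and the norm ‖T^{1/2}·‖ equal to the L²(Θ, Q_w) norm, this yields the bound of Theorem B.4 on ‖I_CBQ − I‖_{L²(Θ, Q_w)}.) -/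

import Mathlib

/-!
Write `A = T + λ`, `Â = T̂ + λ`, `R = A^{-1/2}` and `B = R (T - T̂) R`. Since `Â⁻¹ T̂ = 1 - λ Â⁻¹`,
`Â⁻¹ T̂ g - h = Â⁻¹ T̂ (g - h) - λ Â⁻¹ h`.

For the first term, `R Â R = 1 - B` is bounded below by `1 - c`, so with `w = A R Â⁻¹ y` one gets
`(1 - c) ‖w‖ ≤ ‖R y‖`; as `T^{1/2} R` and `R T` are contractions (`‖T‖ ≤ 1`), this gives
`‖T^{1/2} Â⁻¹ T̂ u‖ ≤ ‖w‖ ≤ (1 - c)⁻¹ ‖R T̂ u‖ ≤ (1 - c)⁻¹ (1 + s) ‖u‖`.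

For the second term, the resolvent identity `Â⁻¹ = A⁻¹ + A⁻¹ (T - T̂) Â⁻¹`, together with
`‖R‖ ≤ λ^{-1/2}` and `‖Â⁻¹‖ ≤ λ⁻¹`, gives `λ ‖T^{1/2} Â⁻¹ h‖ ≤ (√λ + s) ‖h‖`.
-/

open RCLike
open scoped InnerProductSpace

theorem mul_mul_eq_one_of_mul_self_eq {M : Type*} [Monoid M] {A S R : M}
    (hAS : A * S = 1) (hSA : S * A = 1) (hR : R * R = S) : R * A * R = 1 := by
  have hcomm : A * R = R * A :=
    left_inv_eq_right_inv (by rw [mul_assoc, hR, hAS]) (by rw [← mul_assoc, hR, hSA])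
  rw [mul_assoc, hcomm, ← mul_assoc, hR, hSA]

theorem sub_eq_mul_sub_mul_of_mul_eq_one {A : Type*} [Ring A] {a b s t : A}
    (hs : s * a = 1) (ht : b * t = 1) : t - s = s * (a - b) * t := by
  rw [mul_sub, sub_mul, hs, one_mul, mul_assoc, ht, mul_one]

theorem ContinuousLinearMap.one_sub_mul_norm_le_norm_sub_apply {𝕜 F : Type*}
    [NontriviallyNormedField 𝕜] [SeminormedAddCommGroup F] [NormedSpace 𝕜 F] {B : F →L[𝕜] F}
    {c : ℝ} (hB : ‖B‖ ≤ c) (w : F) : (1 - c) * ‖w‖ ≤ ‖w - B w‖ := by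
  have := B.le_of_opNorm_le hB w
  have := norm_sub_norm_le w (B w)
  linarith

section

variable {𝕜 E : Type*} [RCLike 𝕜] [NormedAddCommGroup E] [InnerProductSpace 𝕜 E]

namespace ContinuousLinearMap

theorem re_inner_add_smul_one_apply (T : E →L[𝕜] E) (lam : ℝ) (y : E) :
    re ⟪y, (T + (lam : 𝕜) • 1) y⟫_𝕜 = re ⟪y, T y⟫_𝕜 + lam * ‖y‖ ^ 2 := by
  simp [inner_add_right, inner_smul_right]

theorem IsPositive.mul_norm_sq_le_re_inner_add_smul_one {T : E →L[𝕜] E} (hT : T.IsPositive)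
    (lam : ℝ) (y : E) : lam * ‖y‖ ^ 2 ≤ re ⟪y, (T + (lam : 𝕜) • 1) y⟫_𝕜 := by
  rw [re_inner_add_smul_one_apply]
  linarith [hT.re_inner_nonneg_right y]

theorem IsPositive.mul_norm_le_norm_add_smul_one_apply {T : E →L[𝕜] E} (hT : T.IsPositive)
    (lam : ℝ) (y : E) : lam * ‖y‖ ≤ ‖(T + (lam : 𝕜) • 1) y‖ := by
  rcases (norm_nonneg y).eq_or_lt with hy | hy
  · simp [← hy]
  refine le_of_mul_le_mul_right ?_ hy
  calc lam * ‖y‖ * ‖y‖ = lam * ‖y‖ ^ 2 := by ring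
    _ ≤ re ⟪y, (T + (lam : 𝕜) • 1) y⟫_𝕜 := hT.mul_norm_sq_le_re_inner_add_smul_one lam y
    _ ≤ ‖y‖ * ‖(T + (lam : 𝕜) • 1) y‖ := re_inner_le_norm _ _
    _ = _ := mul_comm _ _

end ContinuousLinearMap

namespace LinearMap.IsSymmetric

theorem norm_sq_apply_clm {P : E →L[𝕜] E} (hP : P.IsSymmetric) (x : E) :
    ‖P x‖ ^ 2 = re ⟪x, (P * P) x⟫_𝕜 := by
  rw [← inner_self_eq_norm_sq (𝕜 := 𝕜), hP.apply_clm]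
  rfl

theorem norm_sq_eq_re_inner_of_mul_mul_eq_one {R A : E →L[𝕜] E} (hR : R.IsSymmetric)
    (hRAR : R * A * R = 1) (z : E) : ‖z‖ ^ 2 = re ⟪R z, A (R z)⟫_𝕜 := by
  rw [hR.apply_clm, show R (A (R z)) = z from DFunLike.congr_fun hRAR z, inner_self_eq_norm_sq]

theorem norm_apply_le_of_mul_self_eq {P T : E →L[𝕜] E} (hP : P.IsSymmetric) (hPT : P * P = T)
    (hT : ‖T‖ ≤ 1) (x : E) : ‖P x‖ ≤ ‖x‖ := by
  refine (sq_le_sq₀ (norm_nonneg _) (norm_nonneg _)).mp ?_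
  calc ‖P x‖ ^ 2 = re ⟪x, T x⟫_𝕜 := by rw [hP.norm_sq_apply_clm, hPT]
    _ ≤ ‖x‖ * ‖T x‖ := re_inner_le_norm _ _
    _ ≤ ‖x‖ * ‖x‖ := by gcongr; simpa using T.le_of_opNorm_le hT x
    _ = ‖x‖ ^ 2 := (sq _).symm

/-- Test `y = P Q Q x` against itself: `‖y‖² = re ⟪Q x, Q P y⟫ ≤ ‖x‖ ‖y‖`. -/
theorem norm_apply_apply_apply_le {P Q : E →L[𝕜] E} (hP : P.IsSymmetric) (hQ : Q.IsSymmetric)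
    (hQP : ∀ z, ‖Q (P z)‖ ≤ ‖z‖) (hQ1 : ∀ x, ‖Q x‖ ≤ ‖x‖) (x : E) : ‖P (Q (Q x))‖ ≤ ‖x‖ := by
  set y := P (Q (Q x))
  rcases (norm_nonneg y).eq_or_lt with hy | hy
  · rw [← hy]; exact norm_nonneg x
  refine le_of_mul_le_mul_right ?_ hy
  calc ‖y‖ * ‖y‖ = re ⟪Q x, Q (P y)⟫_𝕜 := by
        rw [← hQ.apply_clm, ← hP.apply_clm, inner_self_eq_norm_mul_norm]
    _ ≤ ‖Q x‖ * ‖Q (P y)‖ := re_inner_le_norm _ _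
    _ ≤ ‖x‖ * ‖y‖ := by gcongr <;> simp only [hQ1, hQP]

end LinearMap.IsSymmetric

namespace ContinuousLinearMap

variable {T R Rt : E →L[𝕜] E} {lam : ℝ}

theorem norm_apply_apply_le_of_mul_mul_eq_one (hRt : Rt.IsSymmetric) (hRtT : Rt * Rt = T)
    (hR : R.IsSymmetric) (hRAR : R * (T + (lam : 𝕜) • 1) * R = 1) (hlam : 0 ≤ lam) (z : E) :
    ‖Rt (R z)‖ ≤ ‖z‖ := by
  refine (sq_le_sq₀ (norm_nonneg _) (norm_nonneg _)).mp ?_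
  rw [hRt.norm_sq_apply_clm, hRtT, hR.norm_sq_eq_re_inner_of_mul_mul_eq_one hRAR,
    re_inner_add_smul_one_apply]
  exact le_add_of_nonneg_right (by positivity)

theorem IsPositive.sqrt_mul_norm_apply_le_of_mul_mul_eq_one (hT : T.IsPositive)
    (hR : R.IsSymmetric) (hRAR : R * (T + (lam : 𝕜) • 1) * R = 1) (hlam : 0 ≤ lam) (z : E) :
    √lam * ‖R z‖ ≤ ‖z‖ := by
  refine (sq_le_sq₀ (by positivity) (norm_nonneg _)).mp ?_
  rw [mul_pow, Real.sq_sqrt hlam, hR.norm_sq_eq_re_inner_of_mul_mul_eq_one hRAR z]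
  exact hT.mul_norm_sq_le_re_inner_add_smul_one lam (R z)

theorem norm_apply_inverse_le {A Ahat Shat : E →L[𝕜] E} {c : ℝ}
    (hRtR : ∀ z, ‖Rt (R z)‖ ≤ ‖z‖) (hRAR : R * A * R = 1) (hShat : Ahat * Shat = 1)
    (hB : ‖R * (A - Ahat) * R‖ ≤ c) (hc : c < 1) (y : E) :
    ‖Rt (Shat y)‖ ≤ (1 - c)⁻¹ * ‖R y‖ := by
  set w := A (R (Shat y))
  have hw : R w = Shat y := DFunLike.congr_fun hRAR (Shat y)
  have hBw : w - (R * (A - Ahat) * R) w = R y := by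
    have hAhat : Ahat (Shat y) = y := DFunLike.congr_fun hShat y
    rw [mul_sub, sub_mul, hRAR]
    show w - (w - R (Ahat (R w))) = R y
    rw [sub_sub_cancel, hw, hAhat]
  calc ‖Rt (Shat y)‖ ≤ ‖w‖ := hw ▸ hRtR w
    _ ≤ (1 - c)⁻¹ * ‖R y‖ := by
      rw [← div_eq_inv_mul, le_div_iff₀' (sub_pos.2 hc), ← hBw]
      exact one_sub_mul_norm_le_norm_sub_apply hB w

theorem norm_apply_inverse_apply_le {That Shat : E →L[𝕜] E} {c s : ℝ}
    (hRt : Rt.IsSymmetric) (hRtT : Rt * Rt = T) (hTnorm : ‖T‖ ≤ 1) (hR : R.IsSymmetric)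
    (hRtR : ∀ z, ‖Rt (R z)‖ ≤ ‖z‖) (hRAR : R * (T + (lam : 𝕜) • 1) * R = 1)
    (hShat : (That + (lam : 𝕜) • 1) * Shat = 1) (hB : ‖R * (T - That) * R‖ ≤ c) (hc : c < 1)
    (hs : ‖R * (T - That)‖ ≤ s) (u : E) :
    ‖Rt (Shat (That u))‖ ≤ (1 - c)⁻¹ * ((s + 1) * ‖u‖) := by
  refine (norm_apply_inverse_le hRtR hRAR hShat (by rwa [add_sub_add_right_eq_sub]) hc _).trans ?_
  have hRT : ‖R (T u)‖ ≤ ‖u‖ := by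
    rw [← hRtT]
    exact hR.norm_apply_apply_apply_le hRt hRtR (hRt.norm_apply_le_of_mul_self_eq hRtT hTnorm) u
  have hRdiff : ‖R ((T - That) u)‖ ≤ s * ‖u‖ := (R * (T - That)).le_of_opNorm_le hs u
  refine mul_le_mul_of_nonneg_left ?_ (inv_nonneg.2 (sub_nonneg.2 hc.le))
  calc ‖R (That u)‖ = ‖R (T u) - R ((T - That) u)‖ := by rw [← map_sub, sub_apply, sub_sub_cancel]
    _ ≤ ‖u‖ + s * ‖u‖ := norm_sub_le_of_le hRT hRdiff
    _ = (s + 1) * ‖u‖ := by ring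

theorem mul_norm_apply_inverse_le {S That Shat : E →L[𝕜] E} {s : ℝ}
    (hT : T.IsPositive) (hThat : That.IsPositive) (hR : R.IsSymmetric)
    (hRtR : ∀ z, ‖Rt (R z)‖ ≤ ‖z‖) (hRS : R * R = S) (hS : S * (T + (lam : 𝕜) • 1) = 1)
    (hRAR : R * (T + (lam : 𝕜) • 1) * R = 1) (hShat : (That + (lam : 𝕜) • 1) * Shat = 1)
    (hs : ‖R * (T - That)‖ ≤ s) (hs0 : 0 ≤ s) (hlam : 0 ≤ lam) (h : E) :
    lam * ‖Rt (Shat h)‖ ≤ (√lam + s) * ‖h‖ := by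
  have hRtS (x : E) : ‖Rt (S x)‖ ≤ ‖R x‖ := by rw [← hRS]; exact hRtR (R x)
  have hres : Shat h = S h + S ((T - That) (Shat h)) := by
    have := sub_eq_mul_sub_mul_of_mul_eq_one hS hShat
    rw [add_sub_add_right_eq_sub] at this
    rw [← sub_eq_iff_eq_add']
    exact DFunLike.congr_fun this h
  have hbias : lam * ‖R h‖ ≤ √lam * ‖h‖ := by
    calc lam * ‖R h‖ = √lam * (√lam * ‖R h‖) := by rw [← mul_assoc, Real.mul_self_sqrt hlam]
      _ ≤ √lam * ‖h‖ := by
        gcongr; exact hT.sqrt_mul_norm_apply_le_of_mul_mul_eq_one hR hRAR hlam h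
  have hvar : lam * ‖R ((T - That) (Shat h))‖ ≤ s * ‖h‖ := by
    have hShat_le : lam * ‖Shat h‖ ≤ ‖h‖ := by
      simpa only [← mul_apply_eq_comp, hShat, one_apply_eq_self] using
        hThat.mul_norm_le_norm_add_smul_one_apply lam (Shat h)
    calc _ ≤ lam * (s * ‖Shat h‖) := by gcongr; exact (R * (T - That)).le_of_opNorm_le hs _
      _ = s * (lam * ‖Shat h‖) := by ring
      _ ≤ s * ‖h‖ := by gcongr
  calc lam * ‖Rt (Shat h)‖ = lam * ‖Rt (S h) + Rt (S ((T - That) (Shat h)))‖ := by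
        rw [← map_add, ← hres]
    _ ≤ lam * ‖R h‖ + lam * ‖R ((T - That) (Shat h))‖ := by
        rw [← mul_add]
        gcongr
        exact norm_add_le_of_le (hRtS _) (hRtS _)
    _ ≤ (√lam + s) * ‖h‖ := by rw [add_mul]; exact add_le_add hbias hvar

end ContinuousLinearMap

end

theorem stmt_8_general {H : Type*} [NormedAddCommGroup H] [InnerProductSpace ℂ H]
    (T That S R Shat Rt : H →L[ℂ] H)
    (hT : T.IsPositive) (hThat : That.IsPositive) (hTnorm : ‖T‖ ≤ 1)
    (lam : ℝ) (hlam : 0 < lam)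
    (hS₁ : (T + (lam : ℂ) • (1 : H →L[ℂ] H)) * S = 1)
    (hS₂ : S * (T + (lam : ℂ) • (1 : H →L[ℂ] H)) = 1)
    (hR : R.IsPositive) (hRsq : R * R = S)
    (hShat₁ : (That + (lam : ℂ) • (1 : H →L[ℂ] H)) * Shat = 1)
    (hShat₂ : Shat * (That + (lam : ℂ) • (1 : H →L[ℂ] H)) = 1)
    (hRt : Rt.IsPositive) (hRtsq : Rt * Rt = T)
    (c : ℝ) (hc1 : c < 1) (hB : ‖R * (T - That) * R‖ ≤ c)
    (s : ℝ) (hs : 0 ≤ s) (hS2bound : ‖R * (T - That)‖ ≤ s)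
    (g h : H) :
    ‖Rt (Shat (That g) - h)‖ ≤
      (1 - c)⁻¹ * ((s + 1) * ‖g - h‖ + 2 * s * ‖h‖) + Real.sqrt lam * ‖h‖ := by
  have hRAR := mul_mul_eq_one_of_mul_self_eq hS₁ hS₂ hRsq
  have hRtR := ContinuousLinearMap.norm_apply_apply_le_of_mul_mul_eq_one hRt.isSymmetric hRtsq
    hR.isSymmetric hRAR hlam.le
  have hsplit : Shat (That g) - h = Shat (That (g - h)) - (lam : ℂ) • Shat h := by
    have hh : Shat (That h) + (lam : ℂ) • Shat h = h := by
      simpa using DFunLike.congr_fun hShat₂ h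
    rw [map_sub, map_sub, sub_sub, hh]
  have hinv : 1 ≤ (1 - c)⁻¹ :=
    one_le_inv₀ (sub_pos.2 hc1) |>.2 (by linarith [(norm_nonneg _).trans hB])
  calc ‖Rt (Shat (That g) - h)‖ ≤ ‖Rt (Shat (That (g - h)))‖ + lam * ‖Rt (Shat h)‖ := by
        rw [hsplit, map_sub, map_smul]
        refine (norm_sub_le _ _).trans_eq ?_
        rw [norm_smul, Complex.norm_real, Real.norm_of_nonneg hlam.le]
    _ ≤ (1 - c)⁻¹ * ((s + 1) * ‖g - h‖) + (√lam + s) * ‖h‖ :=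
        add_le_add
          (ContinuousLinearMap.norm_apply_inverse_apply_le hRt.isSymmetric hRtsq hTnorm
            hR.isSymmetric hRtR hRAR hShat₁ hB hc1 hS2bound _)
          (ContinuousLinearMap.mul_norm_apply_inverse_le hT hThat hR.isSymmetric hRtR hRsq hS₂
            hRAR hShat₁ hS2bound hs hlam.le h)
    _ ≤ _ := by
        have hsh : 0 ≤ s * ‖h‖ := by positivity
        nlinarith [mul_le_mul_of_nonneg_right hinv hsh, mul_nonneg (zero_le_one.trans hinv) hsh]

/-- Deterministic core of Theorem B.4 (convergence of noisy importance-weighted kernel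
ridge regression).  `T`, `T̂` are positive bounded operators with `‖T‖ ≤ 1`, `λ > 0`;
`S` is the inverse of `T + λ·Id` and `R` its positive square root, so `R = (T + λ·Id)^{-1/2}`;
`Shat` is the inverse of `T̂ + λ·Id`; `Rt` is the positive square root of `T`, i.e. `T^{1/2}`.
With `B := R (T − T̂) R`, if `‖B‖ ≤ c` for some `c ∈ (0,1)` and
`‖(T + λ·Id)^{-1/2}(T − T̂)‖ ≤ s` with `s ≥ 0`, then for all `g h`,
`‖T^{1/2}((T̂ + λ·Id)⁻¹ T̂ g − h)‖ ≤ (1 − c)⁻¹ ((s + 1)‖g − h‖ + 2 s ‖h‖) + √λ ‖h‖`. -/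
theorem stmt_8 {H : Type*} [NormedAddCommGroup H] [InnerProductSpace ℂ H] [CompleteSpace H]
    (T That S R Shat Rt : H →L[ℂ] H)
    (hT : T.IsPositive) (hThat : That.IsPositive) (hTnorm : ‖T‖ ≤ 1)
    (lam : ℝ) (hlam : 0 < lam)
    (hS₁ : (T + (lam : ℂ) • (1 : H →L[ℂ] H)) * S = 1)
    (hS₂ : S * (T + (lam : ℂ) • (1 : H →L[ℂ] H)) = 1)
    (hR : R.IsPositive) (hRsq : R * R = S)
    (hShat₁ : (That + (lam : ℂ) • (1 : H →L[ℂ] H)) * Shat = 1)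
    (hShat₂ : Shat * (That + (lam : ℂ) • (1 : H →L[ℂ] H)) = 1)
    (hRt : Rt.IsPositive) (hRtsq : Rt * Rt = T)
    (c : ℝ) (hc0 : 0 < c) (hc1 : c < 1) (hB : ‖R * (T - That) * R‖ ≤ c)
    (s : ℝ) (hs : 0 ≤ s) (hS2bound : ‖R * (T - That)‖ ≤ s)
    (g h : H) :
    ‖Rt (Shat (That g) - h)‖ ≤
      (1 - c)⁻¹ * ((s + 1) * ‖g - h‖ + 2 * s * ‖h‖) + Real.sqrt lam * ‖h‖ :=
  stmt_8_general T That S R Shat Rt hT hThat hTnorm lam hlam hS₁ hS₂ hR hRsq hShat₁ hShat₂ hRt hRtsq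
    c hc1 hB s hs hS2bound g h
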